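/- arXiv:1808.04264 — 3 statements merged into one kernel-verified Lean document; each statement's English description precedes it below -/
import Mathlib

section
/- For all closed PGA terms t and t', the instruction sequences denoted by t and t' in the sequence model are equal if and only if the equation t = t' is derivable from the axioms PGA1–PGA4. -/
/-- Primitive instructions over a set `A` of basic instructions. -/
inductive PrimInstr (A : Type) : Type where
  | basic : A → PrimInstr A
  | pos : A → PrimInstr A
  | neg : A → PrimInstr A
  | jump : Nat → PrimInstr A
  | halt : PrimInstr A

/-- Closed PGA terms over a set `A` of basic instructions. -/
inductive PGATerm (A : Type) : Type where
  | instr : PrimInstr A → PGATerm A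
  | concat : PGATerm A → PGATerm A → PGATerm A
  | rep : PGATerm A → PGATerm A

/-- `t.pow n` is the `(n+1)`-fold concatenation `t^(n+1)` (so powers are ≥ 1). -/
def PGATerm.pow {A : Type} (t : PGATerm A) : Nat → PGATerm A
  | 0 => t
  | n + 1 => PGATerm.concat t (PGATerm.pow t n)

/-- `chain us t` is `u_1 ; u_2 ; … ; u_k ; t`. -/
def chain {A : Type} (us : List (PrimInstr A)) (t : PGATerm A) : PGATerm A :=
  us.foldr (fun u s => PGATerm.concat (PGATerm.instr u) s) t

/-- `ofList u us` is the term `u ; u_1 ; … ; u_k` (a nonempty sequence of instructions). -/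
def ofList {A : Type} : PrimInstr A → List (PrimInstr A) → PGATerm A
  | u, [] => PGATerm.instr u
  | u, v :: vs => PGATerm.concat (PGATerm.instr u) (ofList v vs)

/-- Equational-logic derivability from the axioms PGA1–PGA4 (when `full = false`) or
PGA1–PGA8 (when `full = true`). -/
inductive PGADeriv {A : Type} (full : Bool) : PGATerm A → PGATerm A → Prop where
  | refl (t : PGATerm A) : PGADeriv full t t
  | symm {t s : PGATerm A} : PGADeriv full t s → PGADeriv full s t
  | trans {t s r : PGATerm A} : PGADeriv full t s → PGADeriv full s r → PGADeriv full t r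
  | concat_congr {t t' s s' : PGATerm A} : PGADeriv full t t' → PGADeriv full s s' →
      PGADeriv full (PGATerm.concat t s) (PGATerm.concat t' s')
  | rep_congr {t t' : PGATerm A} : PGADeriv full t t' →
      PGADeriv full (PGATerm.rep t) (PGATerm.rep t')
  | pga1 (t s r : PGATerm A) :
      PGADeriv full (PGATerm.concat (PGATerm.concat t s) r)
        (PGATerm.concat t (PGATerm.concat s r))
  | pga2 (t : PGATerm A) (n : Nat) :
      PGADeriv full (PGATerm.rep (PGATerm.pow t n)) (PGATerm.rep t)
  | pga3 (t s : PGATerm A) :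
      PGADeriv full (PGATerm.concat (PGATerm.rep t) s) (PGATerm.rep t)
  | pga4 (t s : PGATerm A) :
      PGADeriv full (PGATerm.rep (PGATerm.concat t s))
        (PGATerm.concat t (PGATerm.rep (PGATerm.concat s t)))
  | pga5 (us : List (PrimInstr A)) (h : full = true) :
      PGADeriv full
        (PGATerm.concat (PGATerm.instr (PrimInstr.jump (us.length + 1)))
          (chain us (PGATerm.instr (PrimInstr.jump 0))))
        (PGATerm.concat (PGATerm.instr (PrimInstr.jump 0))
          (chain us (PGATerm.instr (PrimInstr.jump 0))))
  | pga6 (us : List (PrimInstr A)) (l : Nat) (h : full = true) :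
      PGADeriv full
        (PGATerm.concat (PGATerm.instr (PrimInstr.jump (us.length + 1)))
          (chain us (PGATerm.instr (PrimInstr.jump l))))
        (PGATerm.concat (PGATerm.instr (PrimInstr.jump (l + us.length + 1)))
          (chain us (PGATerm.instr (PrimInstr.jump l))))
  | pga7 (us : List (PrimInstr A)) (l : Nat) (h : full = true) :
      PGADeriv full (PGATerm.rep (ofList (PrimInstr.jump (l + us.length + 1)) us))
        (PGATerm.rep (ofList (PrimInstr.jump l) us))
  | pga8 (us : List (PrimInstr A)) (v : PrimInstr A) (vs : List (PrimInstr A)) (l : Nat)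
      (h : full = true) :
      PGADeriv full
        (PGATerm.concat (PGATerm.instr (PrimInstr.jump (l + us.length + vs.length + 2)))
          (chain us (PGATerm.rep (ofList v vs))))
        (PGATerm.concat (PGATerm.instr (PrimInstr.jump (l + us.length + 1)))
          (chain us (PGATerm.rep (ofList v vs))))
/-- The sequence model: non-empty finite or infinite sequences of primitive instructions
(finite sequences as lists, infinite ones as functions on `Nat`). -/
inductive ISeq (A : Type) : Type where
  | fin : List (PrimInstr A) → ISeq A
  | inf : (Nat → PrimInstr A) → ISeq A

/-- Concatenation of instruction sequences; concatenating an infinite sequence with any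
sequence yields the former sequence. -/
def ISeq.seqConcat {A : Type} : ISeq A → ISeq A → ISeq A
  | ISeq.fin l, ISeq.fin l' => ISeq.fin (l ++ l')
  | ISeq.fin l, ISeq.inf f =>
      ISeq.inf (fun n => if h : n < l.length then l.get ⟨n, h⟩ else f (n - l.length))
  | ISeq.inf f, _ => ISeq.inf f

/-- Repetition: the sequence concatenated with itself infinitely many times. -/
def ISeq.seqRep {A : Type} : ISeq A → ISeq A
  | ISeq.fin [] => ISeq.fin []
  | ISeq.fin (u :: l) =>
      ISeq.inf (fun n => (u :: l).get ⟨n % (u :: l).length, Nat.mod_lt n (Nat.succ_pos l.length)⟩)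
  | ISeq.inf f => ISeq.inf f

/-- The instruction sequence denoted by a closed PGA term in the sequence model. -/
def denote {A : Type} : PGATerm A → ISeq A
  | PGATerm.instr u => ISeq.fin [u]
  | PGATerm.concat t s => ISeq.seqConcat (denote t) (denote s)
  | PGATerm.rep t => ISeq.seqRep (denote t)

/-!
Soundness rests on one fact about the sequence model: for a nonempty sequence `x`, `x^ω` is the
unique solution of `y = x ; y`. Both sides of PGA2 and of PGA4 solve the same such equation.

For completeness, every term is provably equal to a normal form `u₁ ; … ; uₖ` or
`u₁ ; … ; uₖ ; (q₀ ; … ; qₘ)^ω`, and finite normal forms are determined by their denotation.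
An infinite normal form can be rotated by PGA4, lengthening its prefix by one, and its period can
be multiplied by PGA2. Two infinite normal forms denoting the same sequence can therefore both be
brought to a common prefix length and a common period length; then both are read off from that
sequence, so they coincide.
-/

namespace ISeq

variable {A : Type}

theorem seqConcat_assoc (x y z : ISeq A) :
    (x.seqConcat y).seqConcat z = x.seqConcat (y.seqConcat z) := by
  rcases x with a | _
  · rcases y with b | _
    · rcases z with c | h
      · simp [seqConcat]
      · simp only [seqConcat, inf.injEq, List.length_append, List.get_eq_getElem]
        funext n
        by_cases hna : n < a.length
        · simp [hna, List.getElem_append_left, show n < a.length + b.length by omega]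
        by_cases hnb : n < a.length + b.length
        · simp only [hna, hnb, show n - a.length < b.length by omega, dite_true, dite_false]
          rw [List.getElem_append_right (by omega)]
        · simp [hna, hnb, show ¬ n - a.length < b.length by omega, Nat.sub_sub]
    · rfl
  · rfl

theorem fin_nil_seqConcat (x : ISeq A) : (fin []).seqConcat x = x := by
  rcases x with _ | _ <;> simp [seqConcat]

theorem seqConcat_ne_fin_nil {x : ISeq A} (hx : x ≠ fin []) (y : ISeq A) :
    x.seqConcat y ≠ fin [] := by
  rcases x with _ | _ <;> rcases y with _ | _ <;> simp_all [seqConcat]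

theorem seqRep_seqConcat {x : ISeq A} (hx : x ≠ fin []) (y : ISeq A) :
    x.seqRep.seqConcat y = x.seqRep := by
  rcases x with ⟨_ | _⟩ | _ <;> simp_all [seqRep, seqConcat]

theorem seqConcat_seqRep {x : ISeq A} (hx : x ≠ fin []) : x.seqConcat x.seqRep = x.seqRep := by
  rcases x with ⟨_ | ⟨u, l⟩⟩ | _
  · exact absurd rfl hx
  · simp only [seqConcat, seqRep, inf.injEq, List.get_eq_getElem]
    funext n
    split_ifs with hn
    · simp only [List.length_cons] at hn
      simp only [List.length_cons, Nat.mod_eq_of_lt hn]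
    · simp only [List.length_cons, not_lt] at hn ⊢
      simp only [← Nat.mod_eq_sub_mod hn]
  · rfl

theorem eq_seqRep_of_seqConcat_eq {x y : ISeq A} (hx : x ≠ fin []) (hy : x.seqConcat y = y) :
    y = x.seqRep := by
  rcases x with ⟨_ | ⟨u, l⟩⟩ | _
  · exact absurd rfl hx
  · have hr := seqConcat_seqRep hx
    rcases y with m | g
    · have := congrArg List.length (fin.inj hy)
      rw [List.length_append, List.length_cons] at this
      omega
    obtain ⟨c, hc⟩ : ∃ c, (fin (u :: l)).seqRep = inf c := ⟨_, rfl⟩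
    rw [hc] at hr ⊢
    have hg := congrFun (inf.inj hy)
    have hc' := congrFun (inf.inj hr)
    congr 1
    funext n
    induction n using Nat.strong_induction_on with
    | _ n ih =>
      rw [← hg, ← hc']
      by_cases hn : n < (u :: l).length
      · rw [dif_pos hn, dif_pos hn]
      · rw [dif_neg hn, dif_neg hn]
        exact ih _ (by simp only [List.length_cons] at hn ⊢; omega)
  · exact hy.symm

end ISeq

open PGATerm

section Soundness

variable {A : Type}

theorem denote_ne_fin_nil (t : PGATerm A) : denote t ≠ .fin [] := by
  induction t with
  | instr u => simp [denote]
  | concat t s iht _ => exact ISeq.seqConcat_ne_fin_nil iht _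
  | rep t iht =>
    rcases hd : denote t with ⟨_ | _⟩ | _
    · exact absurd hd iht
    all_goals simp [denote, hd, ISeq.seqRep]

theorem seqConcat_denote_pow_seqRep (t : PGATerm A) (n : ℕ) :
    (denote (t.pow n)).seqConcat (denote t).seqRep = (denote t).seqRep := by
  induction n with
  | zero => exact ISeq.seqConcat_seqRep (denote_ne_fin_nil t)
  | succ n ih =>
    change ((denote t).seqConcat (denote (t.pow n))).seqConcat _ = _
    rw [ISeq.seqConcat_assoc, ih, ISeq.seqConcat_seqRep (denote_ne_fin_nil t)]

theorem denote_pga4 (t s : PGATerm A) :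
    denote (rep (concat t s)) = denote (concat t (rep (concat s t))) := by
  set x := denote t
  set y := denote s
  have hxy : x.seqConcat y ≠ .fin [] := ISeq.seqConcat_ne_fin_nil (denote_ne_fin_nil t) y
  refine (ISeq.eq_seqRep_of_seqConcat_eq hxy ?_).symm
  change (x.seqConcat y).seqConcat (x.seqConcat (y.seqConcat x).seqRep) = _
  rw [ISeq.seqConcat_assoc, ← ISeq.seqConcat_assoc y,
    ISeq.seqConcat_seqRep (ISeq.seqConcat_ne_fin_nil (denote_ne_fin_nil s) x)]
  rfl

theorem PGADeriv.denote_eq {t t' : PGATerm A} (h : PGADeriv false t t') :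
    denote t = denote t' := by
  induction h with
  | refl => rfl
  | symm _ ih => exact ih.symm
  | trans _ _ ih₁ ih₂ => exact ih₁.trans ih₂
  | concat_congr _ _ ih₁ ih₂ => simp only [denote, ih₁, ih₂]
  | rep_congr _ ih => simp only [denote, ih]
  | pga1 => exact ISeq.seqConcat_assoc _ _ _
  | pga2 t n =>
    exact (ISeq.eq_seqRep_of_seqConcat_eq (denote_ne_fin_nil _)
      (seqConcat_denote_pow_seqRep t n)).symm
  | pga3 t => exact ISeq.seqRep_seqConcat (denote_ne_fin_nil t) _
  | pga4 t s => exact denote_pga4 t s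
  | pga5 _ h | pga6 _ _ h | pga7 _ _ h | pga8 _ _ _ _ h => exact absurd h Bool.false_ne_true

end Soundness

namespace PGATerm

variable {A : Type}

theorem chain_append (us vs : List (PrimInstr A)) (X : PGATerm A) :
    chain (us ++ vs) X = chain us (chain vs X) :=
  List.foldr_append ..

inductive IsNF : PGATerm A → Prop
  | fin (u : PrimInstr A) (us : List (PrimInstr A)) : IsNF (ofList u us)
  | inf (us : List (PrimInstr A)) (q : PrimInstr A) (qs : List (PrimInstr A)) :
      IsNF (chain us (rep (ofList q qs)))

/-- The term `g 0 ; g 1 ; … ; g n`, of `n + 1` instructions. -/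
def ofFn (g : ℕ → PrimInstr A) : ℕ → PGATerm A
  | 0 => instr (g 0)
  | n + 1 => concat (instr (g 0)) (ofFn (fun i => g (i + 1)) n)

/-- The term `f 0 ; … ; f (L - 1) ; (f L ; … ; f (L + P))^ω`. -/
def nf (f : ℕ → PrimInstr A) (L P : ℕ) : PGATerm A :=
  chain (List.ofFn fun i : Fin L => f i) (rep (ofFn (fun i => f (L + i)) P))

theorem ofList_eq_ofFn {q : PrimInstr A} {qs : List (PrimInstr A)} {g : ℕ → PrimInstr A}
    (hg : ∀ i (hi : i < qs.length + 1), g i = (q :: qs)[i]) : ofList q qs = ofFn g qs.length := by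
  induction qs generalizing q g with
  | nil => simp [ofList, ofFn, hg 0 (by simp)]
  | cons r rs ih =>
    change concat (instr q) (ofList r rs) = concat (instr (g 0)) (ofFn (fun i => g (i + 1)) _)
    rw [hg 0 (by simp), ih fun i hi => hg (i + 1) (by simpa using hi)]
    rfl

end PGATerm

namespace PGADeriv

variable {A : Type} {b : Bool}

theorem rep_unfold (t : PGATerm A) : PGADeriv b (rep t) (concat t (rep t)) :=
  (pga2 t 1).symm.trans ((pga4 t t).trans (concat_congr (refl t) (pga2 t 1)))

theorem chain_congr (us : List (PrimInstr A)) {s s' : PGATerm A} (h : PGADeriv b s s') :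
    PGADeriv b (chain us s) (chain us s') := by
  induction us with
  | nil => exact h
  | cons u us ih => exact concat_congr (refl _) ih

theorem chain_rep_concat (us : List (PrimInstr A)) (X W : PGATerm A) :
    PGADeriv b (concat (chain us (rep X)) W) (chain us (rep X)) := by
  induction us with
  | nil => exact pga3 X W
  | cons u us ih => exact (pga1 _ _ _).trans (concat_congr (refl _) ih)

theorem rep_chain_rep (us : List (PrimInstr A)) (X : PGATerm A) :
    PGADeriv b (rep (chain us (rep X))) (chain us (rep X)) :=
  (rep_unfold _).trans (chain_rep_concat us X _)

theorem ofList_append (u : PrimInstr A) (us : List (PrimInstr A)) (v : PrimInstr A)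
    (vs : List (PrimInstr A)) :
    PGADeriv b (ofList u (us ++ v :: vs)) (concat (ofList u us) (ofList v vs)) := by
  induction us generalizing u with
  | nil => exact refl _
  | cons w ws ih => exact (concat_congr (refl _) (ih w)).trans (pga1 _ _ _).symm

theorem chain_cons (u : PrimInstr A) (us : List (PrimInstr A)) (X : PGATerm A) :
    PGADeriv b (chain (u :: us) X) (concat (ofList u us) X) := by
  induction us generalizing u with
  | nil => exact refl _
  | cons v vs ih => exact (concat_congr (refl _) (ih v)).trans (pga1 _ _ _).symm

theorem concat_ofFn (g : ℕ → PrimInstr A) (m n : ℕ) :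
    PGADeriv b (concat (ofFn g m) (ofFn (fun i => g (m + 1 + i)) n)) (ofFn g (m + 1 + n)) := by
  induction m generalizing g with
  | zero => simpa [ofFn, Nat.add_comm 1] using refl _
  | succ m ih =>
    rw [show m + 1 + 1 + n = m + 1 + n + 1 by omega]
    refine (pga1 _ _ _).trans (concat_congr (refl _) ?_)
    convert ih (fun i => g (i + 1)) using 4
    congr 1
    omega

theorem pow_ofFn {g : ℕ → PrimInstr A} {P : ℕ} (hg : ∀ i, g (i + (P + 1)) = g i) (n : ℕ) :
    PGADeriv b ((ofFn g P).pow n) (ofFn g (n * (P + 1) + P)) := by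
  induction n with
  | zero => simpa [PGATerm.pow] using refl _
  | succ n ih =>
    have hshift : (fun i => g (P + 1 + i)) = g := funext fun i => by rw [Nat.add_comm, hg]
    rw [show (n + 1) * (P + 1) + P = P + 1 + (n * (P + 1) + P) by ring]
    refine (concat_congr (refl _) ih).trans ?_
    simpa only [hshift] using concat_ofFn g P (n * (P + 1) + P)

theorem rep_ofFn_rotate {g : ℕ → PrimInstr A} {P : ℕ} (hg : g (P + 1) = g 0) :
    PGADeriv b (rep (ofFn g P)) (concat (instr (g 0)) (rep (ofFn (fun i => g (i + 1)) P))) := by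
  cases P with
  | zero => simpa [ofFn, hg] using rep_unfold (instr (g 0))
  | succ P =>
    refine (pga4 _ _).trans (concat_congr (refl _) (rep_congr ?_))
    simpa [ofFn, hg, Nat.add_comm 1] using concat_ofFn (fun i => g (i + 1)) P 0

theorem nf_succ {f : ℕ → PrimInstr A} {L P : ℕ} (hf : f (L + (P + 1)) = f L) :
    PGADeriv b (nf f L P) (nf f (L + 1) P) := by
  rw [nf, nf, List.ofFn_succ', List.concat_eq_append, chain_append]
  refine chain_congr _ ?_
  simpa [chain, Nat.add_assoc, Nat.add_comm 1] using
    rep_ofFn_rotate (g := fun i => f (L + i)) (b := b) (by simpa using hf)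

theorem nf_realign {f : ℕ → PrimInstr A} {L P : ℕ} (hf : ∀ n, L ≤ n → f (n + (P + 1)) = f n)
    {L' : ℕ} (hL : L ≤ L') (k : ℕ) : PGADeriv b (nf f L P) (nf f L' (k * (P + 1) + P)) := by
  have hshift : PGADeriv b (nf f L P) (nf f L' P) := by
    induction L', hL using Nat.le_induction with
    | base => exact refl _
    | succ n hn ih => exact ih.trans (nf_succ (hf n hn))
  refine hshift.trans (chain_congr _ ((pga2 _ k).symm.trans (rep_congr (pow_ofFn ?_ k))))
  intro i
  simpa [Nat.add_assoc] using hf (L' + i) (by omega)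

end PGADeriv

section Completeness

variable {A : Type}

theorem PGATerm.exists_isNF_deriv {b : Bool} (t : PGATerm A) : ∃ s, IsNF s ∧ PGADeriv b t s := by
  induction t with
  | instr u => exact ⟨_, .fin u [], .refl _⟩
  | concat t s iht ihs =>
    obtain ⟨_, ⟨u, us⟩ | ⟨us, q, qs⟩, ht⟩ := iht
    · obtain ⟨_, ⟨v, vs⟩ | ⟨vs, q, qs⟩, hs⟩ := ihs
      · exact ⟨_, .fin u (us ++ v :: vs), (ht.concat_congr hs).trans (.symm (.ofList_append ..))⟩
      · refine ⟨_, .inf (u :: us ++ vs) q qs, ?_⟩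
        rw [chain_append]
        exact (ht.concat_congr hs).trans (.symm (.chain_cons ..))
    · exact ⟨_, .inf us q qs, (ht.concat_congr (.refl s)).trans (.chain_rep_concat ..)⟩
  | rep t iht =>
    obtain ⟨_, ⟨u, us⟩ | ⟨us, q, qs⟩, ht⟩ := iht
    · exact ⟨_, .inf [] u us, ht.rep_congr⟩
    · exact ⟨_, .inf us q qs, ht.rep_congr.trans (.rep_chain_rep ..)⟩

theorem denote_ofList (u : PrimInstr A) (us : List (PrimInstr A)) :
    denote (ofList u us) = .fin (u :: us) := by
  induction us generalizing u with
  | nil => rfl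
  | cons v vs ih => simp [ofList, denote, ih, ISeq.seqConcat]

theorem denote_chain (us : List (PrimInstr A)) (X : PGATerm A) :
    denote (chain us X) = (ISeq.fin us).seqConcat (denote X) := by
  induction us with
  | nil => exact (ISeq.fin_nil_seqConcat _).symm
  | cons u us ih =>
    change (ISeq.fin [u]).seqConcat (denote (chain us X)) = _
    rw [ih, ← ISeq.seqConcat_assoc]
    rfl

theorem exists_denote_chain_rep_eq_inf (us : List (PrimInstr A)) (q : PrimInstr A)
    (qs : List (PrimInstr A)) : ∃ f, denote (chain us (rep (ofList q qs))) = .inf f := by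
  rw [denote_chain, denote]
  exact ⟨_, by rw [denote_ofList]; rfl⟩

theorem apply_of_denote_chain_rep_eq_inf {us : List (PrimInstr A)} {q : PrimInstr A}
    {qs : List (PrimInstr A)} {f : ℕ → PrimInstr A}
    (h : denote (chain us (rep (ofList q qs))) = .inf f) :
    (∀ i (hi : i < us.length), f i = us[i]) ∧
      ∀ j, f (us.length + j) = (q :: qs)[j % (qs.length + 1)]'(Nat.mod_lt _ (by simp)) := by
  rw [denote_chain, denote, denote_ofList] at h
  have hf := congrFun (ISeq.inf.inj h)
  refine ⟨fun i hi => ?_, fun j => ?_⟩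
  · rw [← hf]
    simp [hi]
  · rw [← hf]
    simp

theorem eq_nf_of_denote_eq_inf {us : List (PrimInstr A)} {q : PrimInstr A}
    {qs : List (PrimInstr A)} {f : ℕ → PrimInstr A}
    (h : denote (chain us (rep (ofList q qs))) = .inf f) :
    chain us (rep (ofList q qs)) = nf f us.length qs.length := by
  obtain ⟨hpre, hcyc⟩ := apply_of_denote_chain_rep_eq_inf h
  have hus : (List.ofFn fun i : Fin us.length => f i) = us := by
    simp only [hpre _ (Fin.is_lt _), List.ofFn_getElem]
  rw [nf, hus, ofList_eq_ofFn (g := fun i => f (us.length + i))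
    fun i hi => by simp only [hcyc, Nat.mod_eq_of_lt hi]]

theorem periodic_of_denote_eq_inf {us : List (PrimInstr A)} {q : PrimInstr A}
    {qs : List (PrimInstr A)} {f : ℕ → PrimInstr A}
    (h : denote (chain us (rep (ofList q qs))) = .inf f) (n : ℕ) (hn : us.length ≤ n) :
    f (n + (qs.length + 1)) = f n := by
  obtain ⟨j, rfl⟩ := Nat.exists_eq_add_of_le hn
  have hcyc := (apply_of_denote_chain_rep_eq_inf h).2
  rw [Nat.add_assoc, hcyc, hcyc]
  simp only [Nat.add_mod_right]

theorem PGADeriv.of_denote_eq {b : Bool} {s s' : PGATerm A} (hs : s.IsNF) (hs' : s'.IsNF)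
    (h : denote s = denote s') : PGADeriv b s s' := by
  rcases hs with ⟨u, us⟩ | ⟨us, q, qs⟩ <;> rcases hs' with ⟨v, vs⟩ | ⟨vs, r, rs⟩
  · rw [denote_ofList, denote_ofList, ISeq.fin.injEq, List.cons.injEq] at h
    rw [h.1, h.2]
    exact refl _
  · obtain ⟨f, hf⟩ := exists_denote_chain_rep_eq_inf vs r rs
    rw [denote_ofList, hf] at h
    cases h
  · obtain ⟨f, hf⟩ := exists_denote_chain_rep_eq_inf us q qs
    rw [denote_ofList, hf] at h
    cases h
  · obtain ⟨f, hf⟩ := exists_denote_chain_rep_eq_inf us q qs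
    have hg := h ▸ hf
    rw [eq_nf_of_denote_eq_inf hf, eq_nf_of_denote_eq_inf hg]
    have h₁ := nf_realign (b := b) (periodic_of_denote_eq_inf hf)
      (le_max_left us.length vs.length) rs.length
    have h₂ := nf_realign (b := b) (periodic_of_denote_eq_inf hg)
      (le_max_right us.length vs.length) qs.length
    rw [show rs.length * (qs.length + 1) + qs.length = qs.length * (rs.length + 1) + rs.length by
      ring] at h₁
    exact h₁.trans h₂.symm

end Completeness

theorem pga_iseq_congruence_general (A : Type) (t t' : PGATerm A) :
    denote t = denote t' ↔ PGADeriv false t t' := by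
  refine ⟨fun h => ?_, PGADeriv.denote_eq⟩
  obtain ⟨s, hs, hts⟩ := exists_isNF_deriv (b := false) t
  obtain ⟨s', hs', hts'⟩ := exists_isNF_deriv (b := false) t'
  have hss' : denote s = denote s' := hts.denote_eq.symm.trans (h.trans hts'.denote_eq)
  exact hts.trans ((PGADeriv.of_denote_eq hs hs' hss').trans hts'.symm)

/-- Closed PGA terms denote the same instruction sequence in the sequence
model iff their equation is derivable from PGA1–PGA4. -/
theorem pga_iseq_congruence (A : Type) (hA : Nonempty A) (t t' : PGATerm A) :
    denote t = denote t' ↔ PGADeriv false t t' :=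
  pga_iseq_congruence_general A t t'
end

section
/- For every closed BRFA term t, there exists a closed BRFA term t' in which no encapsulation operator occurs such that the equation t = t' is derivable from the axioms of BRFA. -/
/-- Closed BRFA terms over a set `F` of foci: the empty Boolean register family, singleton
families `f.BR(b)` (with `some b` an operative register containing `b` and `none` an
inoperative register, i.e. content `M`), composition, and encapsulation. -/
inductive BRFTerm (F : Type) : Type where
  | empty : BRFTerm F
  | reg : F → Option Bool → BRFTerm F
  | comp : BRFTerm F → BRFTerm F → BRFTerm F
  | encap : Set F → BRFTerm F → BRFTerm F

/-- Equational-logic derivability from the axioms BRFC1–BRFC4 and BRFE1–BRFE4 of BRFA. -/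
inductive BRFDeriv {F : Type} : BRFTerm F → BRFTerm F → Prop where
  | refl (u : BRFTerm F) : BRFDeriv u u
  | symm {u v : BRFTerm F} : BRFDeriv u v → BRFDeriv v u
  | trans {u v w : BRFTerm F} : BRFDeriv u v → BRFDeriv v w → BRFDeriv u w
  | comp_congr {u u' v v' : BRFTerm F} : BRFDeriv u u' → BRFDeriv v v' →
      BRFDeriv (BRFTerm.comp u v) (BRFTerm.comp u' v')
  | encap_congr (H : Set F) {u u' : BRFTerm F} : BRFDeriv u u' →
      BRFDeriv (BRFTerm.encap H u) (BRFTerm.encap H u')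
  | brfc1 (u : BRFTerm F) : BRFDeriv (BRFTerm.comp u BRFTerm.empty) u
  | brfc2 (u v : BRFTerm F) : BRFDeriv (BRFTerm.comp u v) (BRFTerm.comp v u)
  | brfc3 (u v w : BRFTerm F) :
      BRFDeriv (BRFTerm.comp (BRFTerm.comp u v) w) (BRFTerm.comp u (BRFTerm.comp v w))
  | brfc4 (f : F) (b b' : Option Bool) :
      BRFDeriv (BRFTerm.comp (BRFTerm.reg f b) (BRFTerm.reg f b')) (BRFTerm.reg f none)
  | brfe1 (H : Set F) : BRFDeriv (BRFTerm.encap H BRFTerm.empty) BRFTerm.empty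
  | brfe2 (H : Set F) (f : F) (b : Option Bool) (h : f ∈ H) :
      BRFDeriv (BRFTerm.encap H (BRFTerm.reg f b)) BRFTerm.empty
  | brfe3 (H : Set F) (f : F) (b : Option Bool) (h : f ∉ H) :
      BRFDeriv (BRFTerm.encap H (BRFTerm.reg f b)) (BRFTerm.reg f b)
  | brfe4 (H : Set F) (u v : BRFTerm F) :
      BRFDeriv (BRFTerm.encap H (BRFTerm.comp u v))
        (BRFTerm.comp (BRFTerm.encap H u) (BRFTerm.encap H v))
/-- A BRFA term in which no encapsulation operator occurs. -/
def EncapFree {F : Type} : BRFTerm F → Prop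
  | BRFTerm.empty => True
  | BRFTerm.reg _ _ => True
  | BRFTerm.comp u v => EncapFree u ∧ EncapFree v
  | BRFTerm.encap _ _ => False


theorem encap_elim_free {F : Type} (H : Set F) (u : BRFTerm F) (hu : EncapFree u) :
    ∃ t' : BRFTerm F, EncapFree t' ∧ BRFDeriv (BRFTerm.encap H u) t' := by
  induction u with
  | empty => exact ⟨BRFTerm.empty, trivial, BRFDeriv.brfe1 H⟩
  | reg f b =>
    by_cases h : f ∈ H
    · exact ⟨BRFTerm.empty, trivial, BRFDeriv.brfe2 H f b h⟩
    · exact ⟨BRFTerm.reg f b, trivial, BRFDeriv.brfe3 H f b h⟩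
  | comp u v ihu ihv =>
    obtain ⟨hu1, hu2⟩ := hu
    obtain ⟨a, ha, da⟩ := ihu hu1
    obtain ⟨b, hb, db⟩ := ihv hu2
    exact ⟨BRFTerm.comp a b, ⟨ha, hb⟩,
      (BRFDeriv.brfe4 H u v).trans (BRFDeriv.comp_congr da db)⟩
  | encap => exact absurd hu id

/-- every closed BRFA term is provably equal to one in which no
encapsulation operator occurs. -/
theorem brfa_encapsulation_elimination (F : Type) (t : BRFTerm F) :
    ∃ t' : BRFTerm F, EncapFree t' ∧ BRFDeriv t t' := by
  induction t with
  | empty => exact ⟨BRFTerm.empty, trivial, BRFDeriv.refl _⟩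
  | reg f b => exact ⟨BRFTerm.reg f b, trivial, BRFDeriv.refl _⟩
  | comp u v ihu ihv =>
    obtain ⟨a, ha, da⟩ := ihu
    obtain ⟨b, hb, db⟩ := ihv
    exact ⟨BRFTerm.comp a b, ⟨ha, hb⟩, BRFDeriv.comp_congr da db⟩
  | encap H u ih =>
    obtain ⟨a, ha, da⟩ := ih
    obtain ⟨b, hb, db⟩ := encap_elim_free H a ha
    exact ⟨b, hb, ((BRFDeriv.encap_congr H da).trans db)⟩
end

section
/- For every closed BRFA term t and every focus f ∈ F, either the equation t = ∂_{{f}}(t) is derivable from the axioms of BRFA, or there exists b ∈ {0, 1, M} such that the equation t = f.BR(b) ⊕ ∂_{{f}}(t) is derivable from the axioms of BRFA. -/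
namespace BRFAaux
open BRFTerm BRFDeriv

/-- encap-free terms -/
inductive EF {F : Type} : BRFTerm F → Prop where
  | empty : EF BRFTerm.empty
  | reg (f : F) (b : Option Bool) : EF (BRFTerm.reg f b)
  | comp {u v} : EF u → EF v → EF (BRFTerm.comp u v)

lemma shuffle {F : Type} (a x y : BRFTerm F) :
    BRFDeriv (comp a (comp x y)) (comp x (comp a y)) := by
  exact .trans (.symm (.brfc3 a x y))
    (.trans (.comp_congr (.brfc2 a x) (.refl y)) (.brfc3 x a y))

lemma encap_push {F : Type} (H : Set F) :
    ∀ s : BRFTerm F, EF s → ∃ s', EF s' ∧ BRFDeriv (encap H s) s' := by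
  intro s hs
  induction hs with
  | empty => exact ⟨_, .empty, .brfe1 H⟩
  | reg g b =>
    by_cases hg : g ∈ H
    · exact ⟨_, .empty, .brfe2 H g b hg⟩
    · exact ⟨_, .reg g b, .brfe3 H g b hg⟩
  | comp hu hv ihu ihv =>
    obtain ⟨u', hu', du⟩ := ihu
    obtain ⟨v', hv', dv⟩ := ihv
    exact ⟨_, .comp hu' hv', .trans (.brfe4 H _ _) (.comp_congr du dv)⟩

lemma elim {F : Type} : ∀ t : BRFTerm F, ∃ s, EF s ∧ BRFDeriv t s := by
  intro t
  induction t with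
  | empty => exact ⟨_, .empty, .refl _⟩
  | reg g b => exact ⟨_, .reg g b, .refl _⟩
  | comp u v ihu ihv =>
    obtain ⟨u', hu', du⟩ := ihu
    obtain ⟨v', hv', dv⟩ := ihv
    exact ⟨_, .comp hu' hv', .comp_congr du dv⟩
  | encap H u ihu =>
    obtain ⟨u', hu', du⟩ := ihu
    obtain ⟨s', hs', ds⟩ := encap_push H u' hu'
    exact ⟨s', hs', .trans (.encap_congr H du) ds⟩

lemma main_ef {F : Type} (f : F) :
    ∀ s : BRFTerm F, EF s →
      BRFDeriv s (encap {f} s) ∨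
        ∃ b, BRFDeriv s (comp (reg f b) (encap {f} s)) := by
  intro s hs
  induction hs with
  | empty => exact Or.inl (.symm (.brfe1 _))
  | reg g b =>
    by_cases hg : g = f
    · subst hg
      refine Or.inr ⟨b, ?_⟩
      exact .trans (.symm (.brfc1 _))
        (.trans (.brfc2 _ _)
          (.trans (.comp_congr (.symm (.brfe2 {g} g b rfl)) (.refl _)) (.brfc2 _ _)))
    · exact Or.inl (.symm (.brfe3 {f} g b (by simpa using hg)))
  | @comp u v hu hv ihu ihv =>
    rcases ihu with du | ⟨b, du⟩ <;> rcases ihv with dv | ⟨b', dv⟩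
    · exact Or.inl (.trans (.comp_congr du dv) (.symm (.brfe4 _ _ _)))
    · refine Or.inr ⟨b', ?_⟩
      exact .trans (.comp_congr du dv)
        (.trans (shuffle _ _ _) (.comp_congr (.refl _) (.symm (.brfe4 _ _ _))))
    · refine Or.inr ⟨b, ?_⟩
      exact .trans (.comp_congr du dv)
        (.trans (.brfc3 _ _ _) (.comp_congr (.refl _) (.symm (.brfe4 _ _ _))))
    · refine Or.inr ⟨none, ?_⟩
      refine .trans (.comp_congr du dv) ?_
      refine .trans (.brfc3 _ _ _) ?_
      refine .trans (.comp_congr (.refl _) (shuffle _ _ _)) ?_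
      refine .trans (.symm (.brfc3 _ _ _)) ?_
      refine .trans (.comp_congr (.brfc4 f b b') (.refl _)) ?_
      exact .comp_congr (.refl _) (.symm (.brfe4 _ _ _))

end BRFAaux

/-- every closed BRFA term is provably equal to `∂_{{f}}(t)` or to
`f.BR(b) ⊕ ∂_{{f}}(t)` for some `b ∈ {0, 1, M}`. -/
theorem brfa_representation (F : Type) (t : BRFTerm F) (f : F) :
    BRFDeriv t (BRFTerm.encap {f} t) ∨
      ∃ b : Option Bool, BRFDeriv t (BRFTerm.comp (BRFTerm.reg f b) (BRFTerm.encap {f} t)) := by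
  obtain ⟨s, hs, dts⟩ := BRFAaux.elim t
  rcases BRFAaux.main_ef f s hs with ds | ⟨b, ds⟩
  · exact Or.inl (dts.trans (ds.trans (BRFDeriv.encap_congr _ dts.symm)))
  · exact Or.inr ⟨b, dts.trans (ds.trans (BRFDeriv.comp_congr (BRFDeriv.refl _)
      (BRFDeriv.encap_congr _ dts.symm)))⟩
end
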